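/- arXiv:1603.01562 — 4 statements merged into one kernel-verified Lean document; each statement's English description precedes it below -/
import Mathlib

section
/- Fix s ≥ 1 and let ζ be the real random variable taking the value √s with probability 1/(2s), the value −√s with probability 1/(2s), and the value 0 with probability 1 − 1/s. Then E[ζ] = 0, E[ζ²] = 1, and for every t ∈ ℝ, E[e^{tζ}] ≤ e^{s t² / 2}; that is, ζ is √s-subgaussian. -/
/-! The law of `ζ` is `(1/s) · (½ δ_{√s} + ½ δ_{-√s}) + (1 - 1/s) · δ₀`, so its moment generating
function is the convex combination `(1/s) cosh (√s t) + (1 - 1/s)`. Both `cosh (√s t)` and `1` are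
at most `exp (s t² / 2)`, the first by `cosh x ≤ exp (x² / 2)`. -/

open MeasureTheory Real

section ThreePointMeasure

variable {α E : Type*} [MeasurableSpace α] [MeasurableSingletonClass α] [NormedAddCommGroup E]

lemma integrable_smul_dirac (f : α → E) {c : ENNReal} (hc : c ≠ ⊤) (p : α) :
    Integrable f (c • Measure.dirac p) :=
  (integrable_dirac enorm_lt_top).smul_measure hc

variable [NormedSpace ℝ E] [CompleteSpace E]

lemma integral_smul_dirac_add_smul_dirac_add_smul_dirac (f : α → E) {a b c : ENNReal}
    (ha : a ≠ ⊤) (hb : b ≠ ⊤) (hc : c ≠ ⊤) (p q r : α) :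
    ∫ x, f x ∂(a • Measure.dirac p + b • Measure.dirac q + c • Measure.dirac r)
      = a.toReal • f p + b.toReal • f q + c.toReal • f r := by
  have hp := integrable_smul_dirac f ha p
  have hq := integrable_smul_dirac f hb q
  have hr := integrable_smul_dirac f hc r
  rw [integral_add_measure (hp.add_measure hq) hr, integral_add_measure hp hq,
    integral_smul_measure, integral_smul_measure, integral_smul_measure,
    integral_dirac, integral_dirac, integral_dirac]

end ThreePointMeasure

/-- The `ℓ`-percent sparse distribution with `s = 1 / (1 - ℓ)`. -/
noncomputable def sparseMeasure (s : ℝ) : Measure ℝ :=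
  ENNReal.ofReal (1 / (2 * s)) • Measure.dirac (√s)
    + ENNReal.ofReal (1 / (2 * s)) • Measure.dirac (-√s)
    + ENNReal.ofReal (1 - 1 / s) • Measure.dirac 0

lemma integral_sparseMeasure {s : ℝ} (hs : 1 ≤ s) (f : ℝ → ℝ) :
    ∫ x, f x ∂sparseMeasure s = (f (√s) + f (-√s)) / (2 * s) + (1 - 1 / s) * f 0 := by
  have hs0 : 0 < s := by linarith
  have hinv : 1 / s ≤ 1 := (div_le_one hs0).2 hs
  rw [sparseMeasure, integral_smul_dirac_add_smul_dirac_add_smul_dirac f ENNReal.ofReal_ne_top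
    ENNReal.ofReal_ne_top ENNReal.ofReal_ne_top, ENNReal.toReal_ofReal (by positivity),
    ENNReal.toReal_ofReal (by linarith)]
  simp only [smul_eq_mul]
  ring

lemma integral_exp_mul_sparseMeasure {s : ℝ} (hs : 1 ≤ s) (t : ℝ) :
    ∫ x, exp (t * x) ∂sparseMeasure s = cosh (t * √s) / s + (1 - 1 / s) := by
  rw [integral_sparseMeasure hs, cosh_eq, mul_zero, exp_zero, mul_one, mul_neg]
  field_simp

lemma cosh_div_add_one_sub_inv_le_exp {s : ℝ} (hs : 1 ≤ s) (t : ℝ) :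
    cosh (t * √s) / s + (1 - 1 / s) ≤ exp (s * t ^ 2 / 2) := by
  have hs0 : 0 < s := by linarith
  have hcosh : cosh (t * √s) ≤ exp (s * t ^ 2 / 2) := by
    convert cosh_le_exp_half_sq (t * √s) using 3
    rw [mul_pow, sq_sqrt hs0.le, mul_comm]
  have hone : 1 ≤ exp (s * t ^ 2 / 2) := one_le_exp (by positivity)
  have hweight : 0 ≤ 1 - 1 / s := by rw [sub_nonneg, div_le_one hs0]; exact hs
  calc cosh (t * √s) / s + (1 - 1 / s)
      ≤ exp (s * t ^ 2 / 2) / s + (1 - 1 / s) * exp (s * t ^ 2 / 2) := by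
        gcongr
        nlinarith
    _ = exp (s * t ^ 2 / 2) := by field_simp; ring

/-- **The `ℓ`-percent sparse distribution is `√s`-subgaussian.**
Fix `s ≥ 1` and let `ζ` be distributed as: `√s` with probability `1/(2s)`, `-√s` with
probability `1/(2s)`, and `0` with probability `1 - 1/s`.  Then `E[ζ] = 0`, `E[ζ²] = 1`,
and `E[exp (t ζ)] ≤ exp (s t² / 2)` for all `t ∈ ℝ`, i.e. `ζ` is `√s`-subgaussian. -/
theorem sparse_distribution_subgaussian (s : ℝ) (hs : 1 ≤ s) :
    (∫ x, x ∂((ENNReal.ofReal (1 / (2 * s))) • Measure.dirac (Real.sqrt s)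
        + (ENNReal.ofReal (1 / (2 * s))) • Measure.dirac (-(Real.sqrt s))
        + (ENNReal.ofReal (1 - 1 / s)) • Measure.dirac (0 : ℝ)) = 0) ∧
    (∫ x, x ^ 2 ∂((ENNReal.ofReal (1 / (2 * s))) • Measure.dirac (Real.sqrt s)
        + (ENNReal.ofReal (1 / (2 * s))) • Measure.dirac (-(Real.sqrt s))
        + (ENNReal.ofReal (1 - 1 / s)) • Measure.dirac (0 : ℝ)) = 1) ∧
    (∀ t : ℝ,
      ∫ x, Real.exp (t * x) ∂((ENNReal.ofReal (1 / (2 * s))) • Measure.dirac (Real.sqrt s)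
        + (ENNReal.ofReal (1 / (2 * s))) • Measure.dirac (-(Real.sqrt s))
        + (ENNReal.ofReal (1 - 1 / s)) • Measure.dirac (0 : ℝ)) ≤
        Real.exp ((Real.sqrt s) ^ 2 * t ^ 2 / 2)) := by
  have hs0 : 0 < s := by linarith
  refine ⟨?_, ?_, fun t => ?_⟩
  · rw [← sparseMeasure, integral_sparseMeasure hs]
    ring
  · rw [← sparseMeasure, integral_sparseMeasure hs, neg_sq, sq_sqrt hs0.le]
    field_simp
    ring
  · rw [← sparseMeasure, integral_exp_mul_sparseMeasure hs, sq_sqrt hs0.le]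
    exact cosh_div_add_one_sub_inv_le_exp hs t
end

section
/- Let b ≥ 1/√2 and let r = (r_1, ..., r_N) have i.i.d. components with E[r_i] = 0, E[r_i²] = 1, and E[e^{t r_i}] ≤ e^{b² t² / 2} for all t ∈ ℝ. Let v ∈ ℝ^N be nonzero and define the random variable T = (r·v)² − ‖v‖², where r·v is the Euclidean inner product and ‖·‖ the Euclidean norm. Then there exist constants c with 0 < c < 1/(8 b⁴) and κ > 0, depending only on b, such that for all δ with 0 < δ ≤ κ ‖v‖², the large deviation rate satisfies sup_{t > 0} ( t δ − ln E[e^{t T}] ) ≥ c δ² / ‖v‖⁴. -/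
/-!
`X = r·v` is sub-Gaussian with variance proxy `C = b²‖v‖²` and `E[X²] = ‖v‖²`. Writing
`exp (s x²)` as a Gaussian average of `exp (2√s x g)` and using Tonelli turns the sub-Gaussian
bound on the mgf of `X` into `E[exp (s X²)] ≤ (1 - 2sC)^(-1/2)`. Together with
`e^y ≤ 1 + y + y² e^y` and `x⁴ ≤ 2 s⁻² exp (s x²)` for `s = 1/(8C)`, this gives
`log E[exp (t (X² - ‖v‖²))] ≤ 256 C² t²` for `0 ≤ t ≤ 1/(8C)`, and `t = δ/(512 C²)` yields the
rate `δ²/(1024 C²)`.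
-/

open MeasureTheory ProbabilityTheory Real
open scoped NNReal ENNReal

lemma exp_neg_sq_add_mul_eq (a g : ℝ) :
    exp (-g ^ 2 + a * g) = exp (a ^ 2 / 4) * exp (-1 * (g - a / 2) ^ 2) := by
  rw [← exp_add]; ring_nf

lemma integrable_exp_neg_sq_add_mul (a : ℝ) : Integrable fun g : ℝ ↦ exp (-g ^ 2 + a * g) := by
  simp_rw [exp_neg_sq_add_mul_eq a]
  exact ((integrable_exp_neg_mul_sq one_pos).comp_sub_right (a / 2)).const_mul _

lemma integral_exp_neg_sq_add_mul (a : ℝ) :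
    ∫ g : ℝ, exp (-g ^ 2 + a * g) = √π * exp (a ^ 2 / 4) := by
  simp_rw [exp_neg_sq_add_mul_eq a]
  rw [integral_const_mul, integral_sub_right_eq_self (fun g ↦ exp (-1 * g ^ 2)),
    integral_gaussian, div_one, mul_comm]

lemma Real.exp_le_one_add_add_sq_mul_exp {y : ℝ} (hy : 0 ≤ y) :
    exp y ≤ 1 + y + y ^ 2 * exp y := by
  have h : (1 - y) * exp y ≤ 1 := by
    simpa [← exp_add] using mul_le_mul_of_nonneg_right (one_sub_le_exp_neg y) (exp_pos y).le
  nlinarith [mul_nonneg (by linarith : 0 ≤ 1 + y) (sub_nonneg.2 h)]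

lemma Real.exp_mul_sq_le_one_add_add_mul_exp {s t : ℝ} (hs : 0 < s) (ht : 0 ≤ t) (x : ℝ) :
    exp (t * x ^ 2) ≤ 1 + t * x ^ 2 + 2 * t ^ 2 / s ^ 2 * exp ((s + t) * x ^ 2) := by
  have hsx : (s * x ^ 2) ^ 2 / 2 ≤ exp (s * x ^ 2) := by
    simpa using pow_div_factorial_le_exp (s * x ^ 2) (by positivity) 2
  calc exp (t * x ^ 2)
      ≤ 1 + t * x ^ 2 + t ^ 2 / s ^ 2 * (s * x ^ 2) ^ 2 * exp (t * x ^ 2) := by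
        convert exp_le_one_add_add_sq_mul_exp (by positivity : 0 ≤ t * x ^ 2) using 2
        field_simp
    _ ≤ 1 + t * x ^ 2 + t ^ 2 / s ^ 2 * (2 * exp (s * x ^ 2)) * exp (t * x ^ 2) := by
        gcongr; linarith
    _ = 1 + t * x ^ 2 + 2 * t ^ 2 / s ^ 2 * exp ((s + t) * x ^ 2) := by
        rw [add_mul, exp_add]; ring

namespace ProbabilityTheory.HasSubgaussianMGF

variable {Ω : Type*} {mΩ : MeasurableSpace Ω} {μ : Measure Ω} {X : Ω → ℝ} {c : ℝ≥0}

lemma lintegral_exp_mul_sq_le [SFinite μ] (h : HasSubgaussianMGF X c μ) {s : ℝ} (hs : 0 ≤ s)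
    (hsc : 2 * s * c < 1) :
    ∫⁻ ω, ENNReal.ofReal (exp (s * X ω ^ 2)) ∂μ ≤ ENNReal.ofReal (√(1 - 2 * s * c))⁻¹ := by
  set a := 2 * √s
  have hπ : 0 < √π := sqrt_pos.2 pi_pos
  have hgap : 0 < 1 - 2 * s * c := by linarith
  -- `exp (s x²)` is, up to the factor `√π`, the Gaussian integral of `g ↦ exp (a x g)`
  have hrepr (x : ℝ) : ENNReal.ofReal (√π) * ENNReal.ofReal (exp (s * x ^ 2)) =
      ∫⁻ g, ENNReal.ofReal (exp (-g ^ 2 + a * x * g)) := by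
    rw [← ofReal_integral_eq_lintegral_ofReal (integrable_exp_neg_sq_add_mul _)
      (ae_of_all _ fun _ ↦ (exp_pos _).le), integral_exp_neg_sq_add_mul,
      ← ENNReal.ofReal_mul hπ.le]
    congr 3
    rw [mul_pow, mul_pow, sq_sqrt hs]; ring
  have hinner (g : ℝ) : ∫⁻ ω, ENNReal.ofReal (exp (-g ^ 2 + a * X ω * g)) ∂μ ≤
      ENNReal.ofReal (exp (-(1 - 2 * s * c) * g ^ 2)) := by
    have hint : Integrable (fun ω ↦ exp (-g ^ 2) * exp (a * g * X ω)) μ :=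
      (h.integrable_exp_mul _).const_mul _
    calc ∫⁻ ω, ENNReal.ofReal (exp (-g ^ 2 + a * X ω * g)) ∂μ
        = ENNReal.ofReal (exp (-g ^ 2) * mgf X μ (a * g)) := by
          rw [mgf, ← integral_const_mul, ofReal_integral_eq_lintegral_ofReal hint
            (ae_of_all _ fun _ ↦ by positivity)]
          simp_rw [← exp_add, mul_right_comm a]
      _ ≤ ENNReal.ofReal (exp (-g ^ 2) * exp (c * (a * g) ^ 2 / 2)) := by
          gcongr; exact h.mgf_le _
      _ = ENNReal.ofReal (exp (-(1 - 2 * s * c) * g ^ 2)) := by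
          rw [← exp_add, mul_pow, mul_pow, sq_sqrt hs]; ring_nf
  have hmeas : AEMeasurable
      (fun p : Ω × ℝ ↦ ENNReal.ofReal (exp (-p.2 ^ 2 + a * X p.1 * p.2))) (μ.prod volume) := by
    have hX : AEMeasurable (fun p : Ω × ℝ ↦ X p.1) (μ.prod volume) := h.aemeasurable.comp_fst
    exact ENNReal.measurable_ofReal.comp_aemeasurable (measurable_exp.comp_aemeasurable
      ((measurable_snd.pow_const 2).neg.aemeasurable.add
        ((hX.const_mul a).mul measurable_snd.aemeasurable)))
  refine (ENNReal.mul_le_mul_iff_right (a := ENNReal.ofReal √π) (by simpa using hπ)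
    ENNReal.ofReal_ne_top).1 ?_
  calc ENNReal.ofReal √π * ∫⁻ ω, ENNReal.ofReal (exp (s * X ω ^ 2)) ∂μ
      = ∫⁻ g, ∫⁻ ω, ENNReal.ofReal (exp (-g ^ 2 + a * X ω * g)) ∂μ := by
        rw [← lintegral_const_mul' _ _ ENNReal.ofReal_ne_top, ← lintegral_lintegral_swap hmeas]
        simp_rw [hrepr]
    _ ≤ ∫⁻ g, ENNReal.ofReal (exp (-(1 - 2 * s * c) * g ^ 2)) := lintegral_mono hinner
    _ = ENNReal.ofReal √π * ENNReal.ofReal (√(1 - 2 * s * c))⁻¹ := by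
        rw [← ofReal_integral_eq_lintegral_ofReal (integrable_exp_neg_mul_sq hgap)
          (ae_of_all _ fun _ ↦ (exp_pos _).le), integral_gaussian, ← ENNReal.ofReal_mul hπ.le,
          sqrt_div' _ hgap.le, div_eq_mul_inv]

lemma integrable_exp_mul_sq [SFinite μ] (h : HasSubgaussianMGF X c μ) {s : ℝ} (hs : 0 ≤ s)
    (hsc : 2 * s * c < 1) : Integrable (fun ω ↦ exp (s * X ω ^ 2)) μ := by
  refine ⟨(measurable_exp.comp_aemeasurable
    ((h.aemeasurable.pow_const 2).const_mul s)).aestronglyMeasurable, ?_⟩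
  rw [hasFiniteIntegral_iff_ofReal (ae_of_all _ fun _ ↦ (exp_pos _).le)]
  exact (h.lintegral_exp_mul_sq_le hs hsc).trans_lt ENNReal.ofReal_lt_top

lemma integral_exp_mul_sq_le [SFinite μ] (h : HasSubgaussianMGF X c μ) {s : ℝ} (hs : 0 ≤ s)
    (hsc : 2 * s * c < 1) : ∫ ω, exp (s * X ω ^ 2) ∂μ ≤ (√(1 - 2 * s * c))⁻¹ := by
  rw [integral_eq_lintegral_of_nonneg_ae (ae_of_all _ fun _ ↦ (exp_pos _).le)
    (h.integrable_exp_mul_sq hs hsc).1]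
  exact ENNReal.toReal_le_of_le_ofReal (by positivity) (h.lintegral_exp_mul_sq_le hs hsc)

lemma integral_exp_mul_sq_le_one_add [IsProbabilityMeasure μ] (h : HasSubgaussianMGF X c μ)
    (hc : 0 < c) {t : ℝ} (ht : 0 ≤ t) (htc : 8 * c * t ≤ 1) :
    ∫ ω, exp (t * X ω ^ 2) ∂μ ≤ 1 + t * ∫ ω, X ω ^ 2 ∂μ + 256 * c ^ 2 * t ^ 2 := by
  have hc' : (0 : ℝ) < c := hc
  -- the auxiliary exponent `s` absorbs the factor `X⁴` at the price of `t² / s²`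
  set s : ℝ := (8 * c)⁻¹ with hs_def
  have hs : 0 < s := by positivity
  have hstc : 2 * (s + t) * c ≤ 1 / 2 := by
    have : 2 * s * c = 1 / 4 := by rw [hs_def]; field_simp; norm_num
    nlinarith
  have hexp : ∫ ω, exp ((s + t) * X ω ^ 2) ∂μ ≤ 2 := by
    refine (h.integral_exp_mul_sq_le (by positivity) (by linarith)).trans ?_
    rw [inv_le_comm₀ (sqrt_pos.2 (by linarith)) two_pos, le_sqrt (by norm_num) (by linarith)]
    linarith
  have hsq := (h.memLp 2).integrable_sq
  have hexp_int := h.integrable_exp_mul_sq (s := s + t) (by positivity) (by linarith)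
  have hlin : Integrable (fun ω ↦ 1 + t * X ω ^ 2) μ := (integrable_const 1).add (hsq.const_mul t)
  calc ∫ ω, exp (t * X ω ^ 2) ∂μ
      ≤ ∫ ω, 1 + t * X ω ^ 2 + 2 * t ^ 2 / s ^ 2 * exp ((s + t) * X ω ^ 2) ∂μ :=
        integral_mono (h.integrable_exp_mul_sq ht (by nlinarith))
          (hlin.add (hexp_int.const_mul _))
          fun ω ↦ exp_mul_sq_le_one_add_add_mul_exp hs ht (X ω)
    _ = 1 + t * ∫ ω, X ω ^ 2 ∂μ + 2 * t ^ 2 / s ^ 2 * ∫ ω, exp ((s + t) * X ω ^ 2) ∂μ := by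
        rw [integral_add hlin (hexp_int.const_mul _),
          integral_add (integrable_const 1) (hsq.const_mul t), integral_const_mul,
          integral_const_mul]
        simp
    _ ≤ 1 + t * ∫ ω, X ω ^ 2 ∂μ + 2 * t ^ 2 / s ^ 2 * 2 := by gcongr
    _ = 1 + t * ∫ ω, X ω ^ 2 ∂μ + 256 * c ^ 2 * t ^ 2 := by
        rw [hs_def]; field_simp; ring

lemma integrable_exp_mul_sq_sub [SFinite μ] (h : HasSubgaussianMGF X c μ) {t : ℝ} (ht : 0 ≤ t)
    (htc : 2 * t * c < 1) (m : ℝ) : Integrable (fun ω ↦ exp (t * (X ω ^ 2 - m))) μ := by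
  simp_rw [mul_sub, sub_eq_neg_add, exp_add]
  exact (h.integrable_exp_mul_sq ht htc).const_mul _

lemma cgf_sq_sub_integral_le [IsProbabilityMeasure μ] (h : HasSubgaussianMGF X c μ)
    (hc : 0 < c) {t : ℝ} (ht : 0 ≤ t) (htc : 8 * c * t ≤ 1) :
    cgf (fun ω ↦ X ω ^ 2 - ∫ ω, X ω ^ 2 ∂μ) μ t ≤ 256 * c ^ 2 * t ^ 2 := by
  have hbound := h.integral_exp_mul_sq_le_one_add hc ht htc
  have hpos : 0 < ∫ ω, exp (t * X ω ^ 2) ∂μ :=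
    integral_exp_pos (h.integrable_exp_mul_sq ht (by nlinarith [(NNReal.coe_pos.2 hc)]))
  simp_rw [cgf, mgf, mul_sub, sub_eq_neg_add, exp_add]
  rw [integral_const_mul, log_mul (exp_pos _).ne' hpos.ne', log_exp]
  linarith [log_le_sub_one_of_pos hpos]

end ProbabilityTheory.HasSubgaussianMGF

namespace ProbabilityTheory

variable {Ω ι : Type*} {mΩ : MeasurableSpace Ω} {μ : Measure Ω} [Fintype ι] {r : ι → Ω → ℝ}

lemma iIndepFun.hasSubgaussianMGF_sum_mul {c : ℝ≥0} (hind : iIndepFun r μ)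
    (hr : ∀ i, HasSubgaussianMGF (r i) c μ) (v : ι → ℝ) :
    HasSubgaussianMGF (fun ω ↦ ∑ i, r i ω * v i) (∑ i, ⟨v i ^ 2, sq_nonneg _⟩ * c) μ := by
  have := HasSubgaussianMGF.sum_of_iIndepFun (s := Finset.univ)
    (hind.comp (fun i x ↦ v i * x) fun i ↦ measurable_const_mul (v i))
    fun i _ ↦ (hr i).const_mul (v i)
  exact this.congr (ae_of_all _ fun ω ↦ by simp [mul_comm])

lemma iIndepFun.integral_sq_sum_mul [IsProbabilityMeasure μ] (hind : iIndepFun r μ)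
    (hr : ∀ i, MemLp (r i) 2 μ) (hmean : ∀ i, ∫ ω, r i ω ∂μ = 0)
    (hvar : ∀ i, ∫ ω, r i ω ^ 2 ∂μ = 1) (v : ι → ℝ) :
    ∫ ω, (∑ i, r i ω * v i) ^ 2 ∂μ = ∑ i, v i ^ 2 := by
  set Y : ι → Ω → ℝ := fun i ω ↦ r i ω * v i
  have hY : ∀ i, MemLp (Y i) 2 μ := fun i ↦ (hr i).mul_const (v i)
  have hYind : Set.Pairwise (Finset.univ : Finset ι) fun i j ↦ Y i ⟂ᵢ[μ] Y j :=
    fun i _ j _ hij ↦ (hind.indepFun hij).comp (measurable_mul_const _) (measurable_mul_const _)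
  have hvar_r (i : ι) : Var[r i; μ] = 1 := by
    rw [variance_of_integral_eq_zero (hr i).aemeasurable (hmean i), hvar i]
  have hmean_sum : ∫ ω, (∑ i, Y i) ω ∂μ = 0 := by
    simp_rw [Finset.sum_apply]
    rw [integral_finsetSum _ fun i _ ↦ (hY i).integrable one_le_two]
    simp [Y, integral_mul_const, hmean]
  calc ∫ ω, (∑ i, r i ω * v i) ^ 2 ∂μ = Var[∑ i, Y i; μ] := by
        rw [variance_of_integral_eq_zero (memLp_finsetSum' _ fun i _ ↦ hY i).aemeasurable
          hmean_sum]
        simp [Y]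
    _ = ∑ i, Var[Y i; μ] := IndepFun.variance_sum (fun i _ ↦ hY i) hYind
    _ = ∑ i, v i ^ 2 := by simp [Y, variance_mul_const, hvar_r]

end ProbabilityTheory

/-- **Main large-deviation theorem for the randomized misfit (Section 3.1).**
Let `b ≥ 1/√2`.  There exist constants `c` with `0 < c < 1/(8b⁴)` and `κ > 0`,
depending only on `b`, such that: whenever `r = (r 1, ..., r N)` has i.i.d. components with
mean `0`, second moment `1` and `E[exp (t * r i)] ≤ exp (b² t² / 2)` for all `t`
(`b`-subgaussian), `v ∈ ℝ^N` is nonzero, and `T = (r·v)² - ‖v‖²`, then for all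
`0 < δ ≤ κ ‖v‖²` the large deviation rate satisfies
`sup_{t>0} (tδ - ln E[exp (t T)]) ≥ c δ² / ‖v‖⁴` (witnessed by some `t > 0` at which the
moment generating function is finite).  Here `‖v‖² = ∑ i, (v i)²` and `r·v = ∑ i, r i * v i`. -/
theorem randomized_misfit_large_deviation_rate (b : ℝ) (hb : 1 / Real.sqrt 2 ≤ b) :
    ∃ c κ : ℝ, 0 < c ∧ c < 1 / (8 * b ^ 4) ∧ 0 < κ ∧
      ∀ {Ω : Type} [MeasurableSpace Ω] (μ : Measure Ω), IsProbabilityMeasure μ →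
      ∀ (N : ℕ) (r : Fin N → Ω → ℝ),
        (∀ i, Measurable (r i)) →
        iIndepFun r μ →
        (∀ i j, IdentDistrib (r i) (r j) μ μ) →
        (∀ i, ∫ ω, r i ω ∂μ = 0) →
        (∀ i, ∫ ω, (r i ω) ^ 2 ∂μ = 1) →
        (∀ i (t : ℝ), Integrable (fun ω => Real.exp (t * r i ω)) μ) →
        (∀ i (t : ℝ), ∫ ω, Real.exp (t * r i ω) ∂μ ≤ Real.exp (b ^ 2 * t ^ 2 / 2)) →
      ∀ v : Fin N → ℝ, v ≠ 0 →
      ∀ δ : ℝ, 0 < δ → δ ≤ κ * ∑ i, (v i) ^ 2 →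
      ∃ t : ℝ, 0 < t ∧
        Integrable (fun ω =>
          Real.exp (t * ((∑ i, r i ω * v i) ^ 2 - ∑ i, (v i) ^ 2))) μ ∧
        c * δ ^ 2 / (∑ i, (v i) ^ 2) ^ 2 ≤
          t * δ - Real.log (∫ ω,
            Real.exp (t * ((∑ i, r i ω * v i) ^ 2 - ∑ i, (v i) ^ 2)) ∂μ) := by
  have hb0 : 0 < b := lt_of_lt_of_le (by positivity) hb
  have hb2 : 1 / 2 ≤ b ^ 2 := by
    simpa [div_pow] using pow_le_pow_left₀ (by positivity) hb 2
  refine ⟨1 / (1024 * b ^ 4), 1, by positivity, by gcongr; norm_num, one_pos, ?_⟩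
  intro Ω _ μ _ N r _ hind _ hmean hvar hint hmgf v hv δ hδ hδS
  have hr (i : Fin N) : HasSubgaussianMGF (r i) ⟨b ^ 2, sq_nonneg b⟩ μ := ⟨hint i, hmgf i⟩
  have hX := hind.hasSubgaussianMGF_sum_mul hr v
  have hX2 := hind.integral_sq_sum_mul (fun i ↦ (hr i).memLp 2) hmean hvar v
  set S := ∑ i, v i ^ 2
  have hS : 0 < S := by
    obtain ⟨i, hi⟩ := Function.ne_iff.1 hv
    exact Finset.sum_pos' (fun j _ ↦ sq_nonneg _)
      ⟨i, Finset.mem_univ i, pow_two_pos_of_ne_zero hi⟩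
  have hC : ((∑ i, ⟨v i ^ 2, sq_nonneg _⟩ * ⟨b ^ 2, sq_nonneg b⟩ : ℝ≥0) : ℝ) = b ^ 2 * S := by
    rw [NNReal.coe_sum, Finset.mul_sum]
    exact Finset.sum_congr rfl fun i _ ↦ mul_comm (v i ^ 2) (b ^ 2)
  clear_value S
  -- `t = δ / (2K)` minimises `K t² - t δ`, where `K t²` bounds the cgf, `K = 256 (b² S)²`
  set t := δ / (512 * b ^ 4 * S ^ 2)
  have ht : 0 < t := by positivity
  have htc : 8 * (b ^ 2 * S) * t ≤ 1 := by
    have : 8 * (b ^ 2 * S) * t = δ / (64 * b ^ 2 * S) := by simp only [t]; field_simp; ring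
    rw [this, div_le_one (by positivity)]
    nlinarith
  have hΛ := hX.cgf_sq_sub_integral_le (NNReal.coe_pos.1 (by rw [hC]; positivity)) ht.le
    (by rwa [hC])
  rw [hX2, hC] at hΛ
  refine ⟨t, ht, hX.integrable_exp_mul_sq_sub ht.le (by rw [hC]; linarith) S, ?_⟩
  calc 1 / (1024 * b ^ 4) * δ ^ 2 / S ^ 2 = t * δ - 256 * (b ^ 2 * S) ^ 2 * t ^ 2 := by
        simp only [t]; field_simp; ring
    _ ≤ _ := sub_le_sub_left hΛ _
end

section
/- Let c > 0, let v ∈ ℝ^N be nonzero, and let r_1, ..., r_n be i.i.d. random vectors in ℝ^N such that for every δ > 0, P[ |(1/n) Σ_{j=1}^n (r_j · v)² − ‖v‖²| > δ ] ≤ exp( −n c δ² / ‖v‖⁴ ). Let 0 < ε < 1, β > 0, and n ≥ β / (c ε²). Then with probability at least 1 − e^{−β}, the following implication holds: if (1/n) Σ_{j=1}^n (r_j · v)² = τ′ N for some τ′ > 0, then ‖v‖² = τ N for some τ ∈ [ τ′/(1 + ε), τ′/(1 − ε) ]. -/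
open MeasureTheory ProbabilityTheory Real
open scoped RealInnerProductSpace

/-! Choose `δ = ε ‖v‖²` in the large deviation bound: since `n c ε² ≥ β`, the event
`|(1/n) ∑_j (r_j · v)² - ‖v‖²| > ε ‖v‖²` has probability at most `exp (-β)`. Off this event,
`τ' N` lies within `ε ‖v‖²` of `‖v‖²`, so `τ = ‖v‖² / N` lies in `[τ'/(1+ε), τ'/(1-ε)]`. -/

lemma div_mem_Icc_of_abs_sub_le {a τ' N ε : ℝ} (hN : 0 < N) (hε0 : 0 ≤ ε) (hε1 : ε < 1)
    (h : |τ' * N - a| ≤ ε * a) : a / N ∈ Set.Icc (τ' / (1 + ε)) (τ' / (1 - ε)) := by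
  obtain ⟨hlow, hupp⟩ := abs_le.1 h
  constructor
  · rw [div_le_div_iff₀ (by linarith) hN]
    linarith
  · rw [div_le_div_iff₀ hN (by linarith)]
    linarith

lemma one_sub_measureReal_le_of_compl_subset {Ω : Type*} [MeasurableSpace Ω] (μ : Measure Ω)
    [IsProbabilityMeasure μ] {A B : Set Ω} (h : Bᶜ ⊆ A) : 1 - μ.real B ≤ μ.real A := by
  rw [sub_le_iff_le_add']
  calc 1 = μ.real (B ∪ Bᶜ) := by rw [Set.union_compl_self, probReal_univ]
    _ ≤ μ.real B + μ.real Bᶜ := measureReal_union_le B Bᶜ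
    _ ≤ μ.real B + μ.real A := by grw [measureReal_mono h]

lemma exp_neg_mul_sq_div_le_exp_neg {n c ε a β : ℝ} (ha : a ≠ 0) (hcε : 0 < c * ε ^ 2)
    (hn : β / (c * ε ^ 2) ≤ n) : exp (-n * c * (ε * a ^ 2) ^ 2 / a ^ 4) ≤ exp (-β) := by
  have hβ : β ≤ n * (c * ε ^ 2) := (div_le_iff₀ hcε).1 hn
  apply exp_le_exp.2
  have h4 : a ^ 4 ≠ 0 := pow_ne_zero 4 ha
  rw [show -n * c * (ε * a ^ 2) ^ 2 / a ^ 4 = -(n * (c * ε ^ 2)) by field_simp]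
  linarith

theorem statistical_morozov_general
    {Ω : Type*} [MeasurableSpace Ω] (μ : Measure Ω) [IsProbabilityMeasure μ]
    (c : ℝ) (hc : 0 < c) (N n : ℕ)
    (r : Fin n → Ω → EuclideanSpace ℝ (Fin N))
    (v : EuclideanSpace ℝ (Fin N)) (hv : v ≠ 0)
    (hLD : ∀ δ : ℝ, 0 < δ →
      (μ {ω | δ < |(1 / (n : ℝ)) * ∑ j, ⟪r j ω, v⟫ ^ 2 - ‖v‖ ^ 2|}).toReal ≤
        Real.exp (-(n : ℝ) * c * δ ^ 2 / ‖v‖ ^ 4))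
    (ε β : ℝ) (hε0 : 0 < ε) (hε1 : ε < 1)
    (hnlb : β / (c * ε ^ 2) ≤ (n : ℝ)) :
    1 - Real.exp (-β) ≤
      (μ {ω | ∀ τ' : ℝ, 0 < τ' →
          (1 / (n : ℝ)) * ∑ j, ⟪r j ω, v⟫ ^ 2 = τ' * N →
          ∃ τ : ℝ, τ ∈ Set.Icc (τ' / (1 + ε)) (τ' / (1 - ε)) ∧
            ‖v‖ ^ 2 = τ * N}).toReal := by
  have hN : (0 : ℝ) < N := Nat.cast_pos.2 <| Nat.pos_of_ne_zero <| by
    rintro rfl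
    exact hv (by ext i; exact i.elim0)
  have hnorm : ‖v‖ ≠ 0 := norm_ne_zero_iff.2 hv
  have hbad := (hLD (ε * ‖v‖ ^ 2) (by positivity)).trans
    (exp_neg_mul_sq_div_le_exp_neg hnorm (by positivity) hnlb)
  refine (sub_le_sub_left hbad 1).trans (one_sub_measureReal_le_of_compl_subset μ ?_)
  intro ω hgood τ' _ hS
  refine ⟨‖v‖ ^ 2 / N, div_mem_Icc_of_abs_sub_le hN hε0.le hε1 ?_, by field_simp⟩
  rw [← hS]
  exact not_lt.1 hgood

/-- **Statistical Morozov's discrepancy principle.**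
Let `v ∈ ℝ^N` be nonzero and let `r 1, ..., r n` be i.i.d. random vectors in `ℝ^N`
satisfying the large deviation bound
`P[|(1/n) ∑_j (r_j · v)² - ‖v‖²| > δ] ≤ exp (-n c δ² / ‖v‖⁴)` for every `δ > 0`.
Let `0 < ε < 1`, `β > 0` and `n ≥ β/(c ε²)`.  Then with probability at least
`1 - exp (-β)`: if `(1/n) ∑_j (r_j · v)² = τ' N` for some `τ' > 0`, then `‖v‖² = τ N`
for some `τ ∈ [τ'/(1+ε), τ'/(1-ε)]`. -/
theorem statistical_morozov
    {Ω : Type*} [MeasurableSpace Ω] (μ : Measure Ω) [IsProbabilityMeasure μ]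
    (c : ℝ) (hc : 0 < c) (N n : ℕ) (hn : 0 < n)
    (r : Fin n → Ω → EuclideanSpace ℝ (Fin N))
    (hindep : iIndepFun r μ)
    (hident : ∀ j k, IdentDistrib (r j) (r k) μ μ)
    (v : EuclideanSpace ℝ (Fin N)) (hv : v ≠ 0)
    (hLD : ∀ δ : ℝ, 0 < δ →
      (μ {ω | δ < |(1 / (n : ℝ)) * ∑ j, ⟪r j ω, v⟫ ^ 2 - ‖v‖ ^ 2|}).toReal ≤
        Real.exp (-(n : ℝ) * c * δ ^ 2 / ‖v‖ ^ 4))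
    (ε β : ℝ) (hε0 : 0 < ε) (hε1 : ε < 1) (hβ : 0 < β)
    (hnlb : β / (c * ε ^ 2) ≤ (n : ℝ)) :
    1 - Real.exp (-β) ≤
      (μ {ω | ∀ τ' : ℝ, 0 < τ' →
          (1 / (n : ℝ)) * ∑ j, ⟪r j ω, v⟫ ^ 2 = τ' * N →
          ∃ τ : ℝ, τ ∈ Set.Icc (τ' / (1 + ε)) (τ' / (1 - ε)) ∧
            ‖v‖ ^ 2 = τ * N}).toReal :=
  statistical_morozov_general μ c hc N n r v hv hLD ε β hε0 hε1 hnlb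
end

section
/- Let F̂ be a real N×m matrix, Σ a real N×n matrix, K a symmetric positive definite real m×m matrix (playing the role of C^{-1}), d̂ ∈ ℝ^N, u_0 ∈ ℝ^m, and ε > 0. Let u* ∈ ℝ^m satisfy (F̂ᵀF̂ + K) u* = F̂ᵀ d̂ + K u_0 and let u_n ∈ ℝ^m satisfy (F̂ᵀ Σ Σᵀ F̂ + K) u_n = F̂ᵀ Σ Σᵀ d̂ + K u_0. Assume ‖Σ Σᵀ (F̂ u*) − F̂ u*‖ ≤ ε ‖F̂ u*‖ and ‖Σ Σᵀ d̂ − d̂‖ ≤ ε ‖d̂‖. Let λ > 0 be the smallest eigenvalue of the symmetric positive definite matrix F̂ᵀ Σ Σᵀ F̂ + K. Then ‖u_n − u*‖ ≤ (ε / λ) ( ‖F̂‖ ‖u*‖ + ‖d̂‖ ) ‖F̂‖, where ‖F̂‖ denotes the operator (spectral) norm and ‖·‖ the Euclidean norm on vectors. -/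
/-!
Subtracting the two normal equations gives
`(F̂ᵀΣΣᵀF̂ + K)(u_n - u*) = F̂ᵀ((ΣΣᵀ - I)d̂ - (ΣΣᵀ - I)F̂u*)`.
The right side is bounded by `‖F̂‖ ε (‖d̂‖ + ‖F̂‖‖u*‖)` using the two Johnson–Lindenstrauss
bounds, and the left side is at least `λ‖u_n - u*‖`, because `λ • 1 ≤ F̂ᵀΣΣᵀF̂ + K` in the
Loewner order.
-/

open Matrix
open scoped Matrix.Norms.L2Operator MatrixOrder

namespace Matrix

theorem mulVec_sub_eq_of_normal_equations {R ι κ : Type*} [CommRing R] [Fintype ι] [Fintype κ]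
    (F : Matrix ι κ R) (P : Matrix ι ι R) (K : Matrix κ κ R) (d : ι → R) (u₀ u v : κ → R)
    (hu : (Fᵀ * F + K) *ᵥ u = Fᵀ *ᵥ d + K *ᵥ u₀)
    (hv : (Fᵀ * P * F + K) *ᵥ v = (Fᵀ * P) *ᵥ d + K *ᵥ u₀) :
    (Fᵀ * P * F + K) *ᵥ (v - u) = Fᵀ *ᵥ ((P *ᵥ d - d) - (P *ᵥ (F *ᵥ u) - F *ᵥ u)) := by
  have hKu : K *ᵥ u = Fᵀ *ᵥ d + K *ᵥ u₀ - Fᵀ *ᵥ (F *ᵥ u) := by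
    rw [← hu, add_mulVec, mulVec_mulVec]
    abel
  rw [mulVec_sub, hv, add_mulVec _ _ u, hKu]
  simp only [mulVec_sub, mulVec_mulVec, Matrix.mul_assoc]
  abel

theorem l2_opNorm_transpose {𝕜 m n : Type*} [RCLike 𝕜] [Fintype m] [Fintype n] [DecidableEq m]
    [DecidableEq n] [TrivialStar 𝕜] (A : Matrix m n 𝕜) : ‖Aᵀ‖ = ‖A‖ := by
  rw [← conjTranspose_eq_transpose_of_trivial, l2_opNorm_conjTranspose]

theorem IsHermitian.posSemidef_sub_smul_one {n : Type*} [Fintype n] [DecidableEq n]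
    {A : Matrix n n ℝ} (hA : A.IsHermitian) {c : ℝ} (hc : ∀ i, c ≤ hA.eigenvalues i) :
    (A - c • 1).PosSemidef := by
  have h : algebraMap ℝ (Matrix n n ℝ) c ≤ A := by
    refine algebraMap_le_of_le_spectrum ?_ hA.isSelfAdjoint
    rw [hA.spectrum_real_eq_range_eigenvalues]
    rintro _ ⟨i, rfl⟩
    exact hc i
  rwa [le_iff, Algebra.algebraMap_eq_smul_one] at h

theorem mul_norm_le_norm_mulVec_of_posSemidef_sub {n : Type*} [Fintype n] [DecidableEq n]
    {A : Matrix n n ℝ} {c : ℝ} (hA : (A - c • 1).PosSemidef) (x : EuclideanSpace ℝ n) :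
    c * ‖x‖ ≤ ‖(EuclideanSpace.equiv n ℝ).symm (A *ᵥ x)‖ := by
  rcases (norm_nonneg x).eq_or_lt with hx | hx
  · rw [← hx, mul_zero]
    exact norm_nonneg _
  have hnorm : ‖x‖ ^ 2 = x ⬝ᵥ x := by
    rw [← real_inner_self_eq_norm_sq, EuclideanSpace.inner_eq_star_dotProduct, star_trivial]
  have hquad : c * ‖x‖ ^ 2 ≤ x ⬝ᵥ (A *ᵥ x) := by
    have := hA.dotProduct_mulVec_nonneg x
    rw [star_trivial, sub_mulVec, smul_mulVec, one_mulVec, dotProduct_sub, dotProduct_smul,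
      smul_eq_mul] at this
    rw [hnorm]
    linarith
  have hCS : x ⬝ᵥ (A *ᵥ x) ≤ ‖x‖ * ‖(EuclideanSpace.equiv n ℝ).symm (A *ᵥ x)‖ := by
    simpa [EuclideanSpace.inner_eq_star_dotProduct, dotProduct_comm] using
      real_inner_le_norm x ((EuclideanSpace.equiv n ℝ).symm (A *ᵥ x))
  refine le_of_mul_le_mul_left ?_ hx
  calc ‖x‖ * (c * ‖x‖) = c * ‖x‖ ^ 2 := by ring
    _ ≤ _ := hquad.trans hCS

end Matrix

theorem rma_linear_solution_error_bound_general
    (N m n : ℕ)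
    (F : Matrix (Fin N) (Fin m) ℝ) (Sg : Matrix (Fin N) (Fin n) ℝ)
    (K : Matrix (Fin m) (Fin m) ℝ)
    (d : EuclideanSpace ℝ (Fin N)) (u0 ustar un : EuclideanSpace ℝ (Fin m))
    (ε : ℝ) (hε : 0 < ε)
    (hustar : (Fᵀ * F + K) *ᵥ ustar = Fᵀ *ᵥ (EuclideanSpace.equiv (Fin N) ℝ d) + K *ᵥ u0)
    (hun : (Fᵀ * Sg * Sgᵀ * F + K) *ᵥ un = (Fᵀ * Sg * Sgᵀ) *ᵥ (EuclideanSpace.equiv (Fin N) ℝ d) + K *ᵥ u0)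
    (hJL1 : ‖(EuclideanSpace.equiv (Fin N) ℝ).symm
        ((Sg * Sgᵀ) *ᵥ (F *ᵥ ustar) - F *ᵥ ustar)‖ ≤
      ε * ‖(EuclideanSpace.equiv (Fin N) ℝ).symm (F *ᵥ ustar)‖)
    (hJL2 : ‖(EuclideanSpace.equiv (Fin N) ℝ).symm ((Sg * Sgᵀ) *ᵥ (EuclideanSpace.equiv (Fin N) ℝ d) - EuclideanSpace.equiv (Fin N) ℝ d)‖ ≤
      ε * ‖d‖)
    (lam : ℝ) (hlam : 0 < lam)
    (hM : (Fᵀ * Sg * Sgᵀ * F + K).IsHermitian)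
    (hlam_eig : lam = ⨅ i, hM.eigenvalues i) :
    ‖un - ustar‖ ≤ ε / lam * (‖F‖ * ‖ustar‖ + ‖d‖) * ‖F‖ := by
  set e := EuclideanSpace.equiv (Fin N) ℝ
  have hlam_le : ∀ i, lam ≤ hM.eigenvalues i := fun i =>
    hlam_eig ▸ ciInf_le (Set.finite_range _).bddBelow i
  have hdiff := mulVec_sub_eq_of_normal_equations F (Sg * Sgᵀ) K (e d) u0 ustar un hustar
    (by simpa only [Matrix.mul_assoc] using hun)
  simp only [← Matrix.mul_assoc] at hdiff
  have hlow := mul_norm_le_norm_mulVec_of_posSemidef_sub (hM.posSemidef_sub_smul_one hlam_le)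
    (un - ustar)
  rw [WithLp.ofLp_sub, hdiff] at hlow
  have hres : ‖e.symm ((Sg * Sgᵀ) *ᵥ e d - e d - ((Sg * Sgᵀ) *ᵥ (F *ᵥ ustar) - F *ᵥ ustar))‖
      ≤ ε * (‖F‖ * ‖ustar‖ + ‖d‖) := by
    rw [map_sub]
    calc _ ≤ ε * ‖d‖ + ε * ‖e.symm (F *ᵥ ustar)‖ := (norm_sub_le _ _).trans (add_le_add hJL2 hJL1)
      _ ≤ ε * ‖d‖ + ε * (‖F‖ * ‖ustar‖) := by gcongr; exact F.l2_opNorm_mulVec ustar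
      _ = ε * (‖F‖ * ‖ustar‖ + ‖d‖) := by ring
  have hbound : lam * ‖un - ustar‖ ≤ ε * (‖F‖ * ‖ustar‖ + ‖d‖) * ‖F‖ :=
    calc lam * ‖un - ustar‖ ≤ ‖Fᵀ‖ * _ := hlow.trans (Fᵀ.l2_opNorm_mulVec _)
      _ ≤ ‖F‖ * (ε * (‖F‖ * ‖ustar‖ + ‖d‖)) :=
        mul_le_mul (l2_opNorm_transpose F).le hres (norm_nonneg _) (norm_nonneg _)
      _ = ε * (‖F‖ * ‖ustar‖ + ‖d‖) * ‖F‖ := by ring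
  rw [div_mul_eq_mul_div, div_mul_eq_mul_div, le_div_iff₀ hlam]
  linarith

/-- **Solution error bound for the randomized misfit approach with a linear
parameter-to-observable map (Theorem (error), part (ii)).**
`F` is the `N × m` map `F̂`, `Sg` the `N × n` random projection matrix `Σ`, `K` a symmetric
positive definite `m × m` matrix (the inverse prior covariance `C⁻¹`), `d ∈ ℝ^N` the data,
`u0 ∈ ℝ^m` the prior mean.  `ustar` solves the original normal equations
`(F̂ᵀF̂ + K) u* = F̂ᵀ d̂ + K u₀`, and `un` solves the randomized normal equations
`(F̂ᵀΣΣᵀF̂ + K) u_n = F̂ᵀΣΣᵀ d̂ + K u₀`.  Assuming the Johnson–Lindenstrauss-type bounds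
`‖ΣΣᵀ(F̂u*) - F̂u*‖ ≤ ε‖F̂u*‖` and `‖ΣΣᵀd̂ - d̂‖ ≤ ε‖d̂‖`, and letting `λ > 0` be the
smallest eigenvalue of `F̂ᵀΣΣᵀF̂ + K`, we have
`‖u_n - u*‖ ≤ (ε/λ)(‖F̂‖‖u*‖ + ‖d̂‖)‖F̂‖`, with `‖F̂‖` the spectral norm and Euclidean
norms on vectors. -/
theorem rma_linear_solution_error_bound
    (N m n : ℕ)
    (F : Matrix (Fin N) (Fin m) ℝ) (Sg : Matrix (Fin N) (Fin n) ℝ)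
    (K : Matrix (Fin m) (Fin m) ℝ) (hK : K.PosDef)
    (d : EuclideanSpace ℝ (Fin N)) (u0 ustar un : EuclideanSpace ℝ (Fin m))
    (ε : ℝ) (hε : 0 < ε)
    (hustar : (Fᵀ * F + K) *ᵥ ustar = Fᵀ *ᵥ (EuclideanSpace.equiv (Fin N) ℝ d) + K *ᵥ u0)
    (hun : (Fᵀ * Sg * Sgᵀ * F + K) *ᵥ un = (Fᵀ * Sg * Sgᵀ) *ᵥ (EuclideanSpace.equiv (Fin N) ℝ d) + K *ᵥ u0)
    (hJL1 : ‖(EuclideanSpace.equiv (Fin N) ℝ).symm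
        ((Sg * Sgᵀ) *ᵥ (F *ᵥ ustar) - F *ᵥ ustar)‖ ≤
      ε * ‖(EuclideanSpace.equiv (Fin N) ℝ).symm (F *ᵥ ustar)‖)
    (hJL2 : ‖(EuclideanSpace.equiv (Fin N) ℝ).symm ((Sg * Sgᵀ) *ᵥ (EuclideanSpace.equiv (Fin N) ℝ d) - EuclideanSpace.equiv (Fin N) ℝ d)‖ ≤
      ε * ‖d‖)
    (lam : ℝ) (hlam : 0 < lam)
    (hM : (Fᵀ * Sg * Sgᵀ * F + K).IsHermitian)
    (hlam_eig : lam = ⨅ i, hM.eigenvalues i) :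
    ‖un - ustar‖ ≤ ε / lam * (‖F‖ * ‖ustar‖ + ‖d‖) * ‖F‖ :=
  rma_linear_solution_error_bound_general N m n F Sg K d u0 ustar un ε hε hustar hun hJL1 hJL2 lam
    hlam hM hlam_eig
end
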